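/- arXiv:1603.08779 — 4 statements merged into one kernel-verified Lean document; each statement's English description precedes it below -/
import Mathlib

section
/- Let G be a finite simple graph and let 𝒫 be the vertex neighborhood partition of G defined by 𝒫(v) = {{u} : u ∈ N_G(v)} for every vertex v (the all-singletons partition). Then the general corona G∘𝒫 is isomorphic to the 2-subdivision S₂(G) of G. -/
open SimpleGraph

namespace GenCorona

universe u

/-- A vertex neighborhood partition of a graph `G`: for every vertex `v`, a partition
of the open neighborhood `N_G(v)` into nonempty sets. -/
structure NbhdPartition {V : Type u} (G : SimpleGraph V) where
  part : V → Set (Set V)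
  nonempty : ∀ v : V, ∀ A ∈ part v, A.Nonempty
  subset_nbhd : ∀ v : V, ∀ A ∈ part v, A ⊆ G.neighborSet v
  covers : ∀ v : V, ∀ u ∈ G.neighborSet v, ∃ A ∈ part v, u ∈ A
  eq_of_inter : ∀ v : V, ∀ A ∈ part v, ∀ B ∈ part v, (A ∩ B).Nonempty → A = B

variable {V : Type u}

/-- The vertex type of the general corona `G ∘ 𝒫`: external vertices `(v,1)` are encoded
as `Sum.inl v`, internal vertices `(v,A)` (with `A ∈ 𝒫(v)`) as `Sum.inr ⟨(v,A), _⟩`. -/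
abbrev CoronaVert (G : SimpleGraph V) (P : NbhdPartition G) : Type u :=
  V ⊕ {p : V × Set V // p.2 ∈ P.part p.1}

/-- The general corona `G ∘ 𝒫`. -/
def corona (G : SimpleGraph V) (P : NbhdPartition G) : SimpleGraph (CoronaVert G P) :=
  SimpleGraph.fromRel fun x y =>
    match x, y with
    | Sum.inl v, Sum.inr p => v = p.val.1
    | Sum.inr p, Sum.inr q =>
        G.Adj p.val.1 q.val.1 ∧ q.val.1 ∈ p.val.2 ∧ p.val.1 ∈ q.val.2
    | _, _ => False

/-- The set of external vertices of the general corona. -/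
def Ext (G : SimpleGraph V) (P : NbhdPartition G) : Set (CoronaVert G P) :=
  Set.range Sum.inl

/-- A graph is a general corona of a tree if it is isomorphic to `T ∘ 𝒫` for some finite
tree `T` and some vertex neighborhood partition `𝒫` of `T`. -/
def IsGeneralCoronaOfTree {W : Type*} (H : SimpleGraph W) : Prop :=
  ∃ (n : ℕ) (T : SimpleGraph (Fin n)) (P : NbhdPartition T),
    T.IsTree ∧ Nonempty (H ≃g corona T P)

/-- A graph `H` is a general corona of a tree with external vertex set `E`. -/
def IsGenCoronaWithExt {W : Type*} (H : SimpleGraph W) (E : Set W) : Prop :=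
  ∃ (n : ℕ) (T : SimpleGraph (Fin n)) (P : NbhdPartition T),
    T.IsTree ∧ ∃ f : H ≃g corona T P, E = ⇑f ⁻¹' Ext T P

/-- `D` is a dominating set of `G`. -/
def IsDominating (G : SimpleGraph V) (D : Set V) : Prop :=
  ∀ v ∉ D, ∃ u ∈ D, G.Adj v u

/-- `S` is a 2-packing of `G`: any two distinct vertices of `S` are at distance
greater than 2 (where the extended distance of unreachable vertices is `⊤`). -/
def Is2Packing (G : SimpleGraph V) (S : Set V) : Prop :=
  ∀ u ∈ S, ∀ v ∈ S, u ≠ v → 2 < G.edist u v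

/-- A leaf is a vertex of degree 1, i.e. with exactly one neighbor. -/
def IsLeaf (G : SimpleGraph V) (v : V) : Prop :=
  (G.neighborSet v).ncard = 1

/-- The domination number: the minimum size of a dominating set. -/
noncomputable def dominationNumber (G : SimpleGraph V) : ℕ :=
  sInf {n : ℕ | ∃ D : Set V, IsDominating G D ∧ D.ncard = n}

/-- The graph obtained from `G` by subdividing every edge in `F` (each once):
for each `e ∈ F` a new vertex `Sum.inr e` replaces the edge `e` by a path of length two. -/
def subdivide (G : SimpleGraph V) (F : Set (Sym2 V)) : SimpleGraph (V ⊕ F) :=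
  SimpleGraph.fromRel fun x y =>
    match x, y with
    | Sum.inl u, Sum.inl v => G.Adj u v ∧ s(u, v) ∉ F
    | Sum.inl u, Sum.inr e => u ∈ e.val
    | _, _ => False

/-- The domination subdivision number `sd(G)`: the minimum number of edges which must be
subdivided (each edge at most once) in order to increase the domination number. -/
noncomputable def sd (G : SimpleGraph V) : ℕ :=
  sInf {k : ℕ | ∃ F : Set (Sym2 V), F ⊆ G.edgeSet ∧ F.ncard = k ∧
    dominationNumber G < dominationNumber (subdivide G F)}

/-- The corona `G ∘ K₁`: attach one new pendant vertex `Sum.inr v` to each vertex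
`Sum.inl v` of `G`. -/
def coronaK1 (G : SimpleGraph V) : SimpleGraph (V ⊕ V) :=
  SimpleGraph.fromRel fun x y =>
    match x, y with
    | Sum.inl u, Sum.inl w => G.Adj u w
    | Sum.inl u, Sum.inr w => u = w
    | _, _ => False

/-- The 2-subdivision `S₂(G)`: every edge `uv` is replaced by a path `(u, x₁, x₂, v)`;
the new vertex `Sum.inr ⟨(u,v), _⟩` is the subdivision vertex adjacent to `u`. -/
def twoSubdivision (G : SimpleGraph V) : SimpleGraph (V ⊕ {p : V × V // G.Adj p.1 p.2}) :=
  SimpleGraph.fromRel fun x y =>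
    match x, y with
    | Sum.inl u, Sum.inr p => u = p.val.1
    | Sum.inr p, Sum.inr q => p.val.1 = q.val.2 ∧ p.val.2 = q.val.1
    | _, _ => False

/-- `𝒫'` is a refinement of `𝒫`. -/
def Refines {G : SimpleGraph V} (P' P : NbhdPartition G) : Prop :=
  ∀ v : V, ∀ A ∈ P'.part v, ∃ B ∈ P.part v, A ⊆ B

/-- The graph obtained by contracting the two vertices `x` and `y` of `G` to the single
vertex `x` (the vertex `y` is removed, and `x` becomes adjacent to all former
neighbors of `y`). -/
def contractPair {W : Type*} (G : SimpleGraph W) (x y : W) :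
    SimpleGraph {w : W // w ≠ y} :=
  SimpleGraph.fromRel fun a b =>
    G.Adj a.val b.val ∨ (a.val = x ∧ G.Adj y b.val) ∨ (b.val = x ∧ G.Adj a.val y)

/-- The graph obtained from `G` by attaching a path `(x, y, z)` (encoded as
`Sum.inr 0, Sum.inr 1, Sum.inr 2`) to the vertex `v` via the edge `v x`. -/
def attachPath3 {W : Type*} (G : SimpleGraph W) (v : W) : SimpleGraph (W ⊕ Fin 3) :=
  SimpleGraph.fromRel fun a b =>
    match a, b with
    | Sum.inl u, Sum.inl w => G.Adj u w
    | Sum.inl u, Sum.inr i => u = v ∧ i = 0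
    | Sum.inr i, Sum.inr j => (i = 0 ∧ j = 1) ∨ (i = 1 ∧ j = 2)
    | _, _ => False

/-- The graph obtained from `G` by attaching a path `(x, y)` (encoded as
`Sum.inr 0, Sum.inr 1`) to the vertex `v` via the edge `v x`. -/
def attachPath2 {W : Type*} (G : SimpleGraph W) (v : W) : SimpleGraph (W ⊕ Fin 2) :=
  SimpleGraph.fromRel fun a b =>
    match a, b with
    | Sum.inl u, Sum.inl w => G.Adj u w
    | Sum.inl u, Sum.inr i => u = v ∧ i = 0
    | Sum.inr i, Sum.inr j => i = 0 ∧ j = 1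
    | _, _ => False

/-- The family `𝓕` of labeled trees; the label of a vertex is `A` when it belongs to the
distinguished set `L`, and `B` otherwise.  The family contains the labeled path `P₄`
(leaves labeled `A`, support vertices labeled `B`) and is closed under the two
attachment operations. -/
inductive LabF : ∀ {W : Type}, SimpleGraph W → Set W → Prop where
  | base : LabF (SimpleGraph.pathGraph 4) ({0, 3} : Set (Fin 4))
  | opA {W : Type} {G : SimpleGraph W} {L : Set W} (v : W) :
      LabF G L → v ∈ L →
        LabF (attachPath3 G v) (Sum.inl '' L ∪ {Sum.inr (2 : Fin 3)})
  | opB {W : Type} {G : SimpleGraph W} {L : Set W} (v : W) :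
      LabF G L → v ∉ L →
        LabF (attachPath2 G v) (Sum.inl '' L ∪ {Sum.inr (1 : Fin 2)})

/-- A tree `T` belongs to the family `𝓕` if it admits a labeling constructed by the
above rules, i.e. it is isomorphic to a member of the inductively generated family. -/
def MemF {W : Type*} (T : SimpleGraph W) : Prop :=
  ∃ (W' : Type) (G : SimpleGraph W') (L : Set W'), LabF G L ∧ Nonempty (T ≃g G)

/-- If `𝒫(v)` is the all-singletons partition of `N_G(v)` for every `v`,
then the general corona `G ∘ 𝒫` is isomorphic to the 2-subdivision `S₂(G)`. -/
theorem corona_singletonPartition_iso_twoSubdivision {V : Type u} [Fintype V]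
    (G : SimpleGraph V) (P : NbhdPartition G)
    (hP : ∀ v : V, P.part v = {A : Set V | ∃ u ∈ G.neighborSet v, A = {u}}) :
    Nonempty (corona G P ≃g twoSubdivision G) := by
  classical
  have hmem : ∀ p : {p : V × Set V // p.2 ∈ P.part p.1},
      ∃ u, G.Adj p.val.1 u ∧ p.val.2 = {u} := by
    intro p
    have h := p.2
    rw [hP] at h
    obtain ⟨u, hu, hA⟩ := h
    exact ⟨u, hu, hA⟩
  -- the chosen neighbor of an internal vertex
  set ch : {p : V × Set V // p.2 ∈ P.part p.1} → V := fun p => (hmem p).choose with hch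
  have hch_adj : ∀ p, G.Adj p.val.1 (ch p) := fun p => (hmem p).choose_spec.1
  have hch_eq : ∀ p, p.val.2 = {ch p} := fun p => (hmem p).choose_spec.2
  -- the equiv on internal vertices
  let g : {p : V × Set V // p.2 ∈ P.part p.1} → {p : V × V // G.Adj p.1 p.2} :=
    fun p => ⟨(p.val.1, ch p), hch_adj p⟩
  let e : {p : V × V // G.Adj p.1 p.2} → {p : V × Set V // p.2 ∈ P.part p.1} :=
    fun q => ⟨(q.val.1, {q.val.2}), by rw [hP]; exact ⟨q.val.2, q.2, rfl⟩⟩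
  have hge : ∀ q, g (e q) = q := by
    intro q
    have h1 : ({q.val.2} : Set V) = {ch (e q)} := hch_eq (e q)
    have h2 : q.val.2 = ch (e q) := by
      have := Set.singleton_eq_singleton_iff.mp h1
      exact this
    apply Subtype.ext
    exact Prod.ext rfl h2.symm
  have heg : ∀ p, e (g p) = p := by
    intro p
    apply Subtype.ext
    exact Prod.ext rfl (hch_eq p).symm
  let eq2 : {p : V × Set V // p.2 ∈ P.part p.1} ≃ {p : V × V // G.Adj p.1 p.2} :=
    ⟨g, e, heg, hge⟩
  let f : CoronaVert G P ≃ (V ⊕ {p : V × V // G.Adj p.1 p.2}) :=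
    Equiv.sumCongr (Equiv.refl V) eq2
  refine ⟨⟨f, ?_⟩⟩
  intro x y
  have key : ∀ p q : {p : V × Set V // p.2 ∈ P.part p.1},
      ((G.Adj p.val.1 q.val.1 ∧ q.val.1 ∈ p.val.2 ∧ p.val.1 ∈ q.val.2) ↔
        (p.val.1 = ch q ∧ ch p = q.val.1)) := by
    intro p q
    rw [hch_eq p, hch_eq q]
    constructor
    · rintro ⟨hadj, h1, h2⟩
      exact ⟨h2, h1.symm⟩
    · rintro ⟨h1, h2⟩
      refine ⟨?_, h2.symm, h1⟩
      rw [← h2]; exact hch_adj p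
  have hne : ∀ p q : {p : V × Set V // p.2 ∈ P.part p.1},
      (p ≠ q ↔ g p ≠ g q) := by
    intro p q
    constructor
    · intro h hc
      exact h (by rw [← heg p, ← heg q, hc])
    · intro h hc
      exact h (by rw [hc])
  cases x with
  | inl v =>
    cases y with
    | inl w =>
      simp [corona, twoSubdivision, f, SimpleGraph.fromRel_adj]
    | inr p =>
      simp only [corona, twoSubdivision, f, SimpleGraph.fromRel_adj,
        Equiv.sumCongr_apply, Equiv.coe_refl, Sum.map_inl, Sum.map_inr, id_eq]
      constructor
      · rintro ⟨hne', h⟩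
        refine ⟨by simp, ?_⟩
        rcases h with h | h
        · exact Or.inl h
        · exact h.elim
      · rintro ⟨-, h⟩
        rcases h with h | h
        · exact ⟨by simp, Or.inl h⟩
        · exact h.elim
  | inr p =>
    cases y with
    | inl w =>
      simp only [corona, twoSubdivision, f, SimpleGraph.fromRel_adj,
        Equiv.sumCongr_apply, Equiv.coe_refl, Sum.map_inl, Sum.map_inr, id_eq]
      constructor
      · rintro ⟨hne', h⟩
        refine ⟨by simp, ?_⟩
        rcases h with h | h
        · exact h.elim
        · exact Or.inr h
      · rintro ⟨-, h⟩
        rcases h with h | h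
        · exact h.elim
        · exact ⟨by simp, Or.inr h⟩
    | inr q =>
      simp only [corona, twoSubdivision, f, SimpleGraph.fromRel_adj,
        Equiv.sumCongr_apply, Equiv.coe_refl, Sum.map_inr, id_eq]
      constructor
      · rintro ⟨hne', h⟩
        refine ⟨by simpa using hne', ?_⟩
        rcases h with h | h
        · exact Or.inl ((key p q).mpr h)
        · exact Or.inr ((key q p).mpr h)
      · rintro ⟨hne', h⟩
        refine ⟨by simpa using hne', ?_⟩
        rcases h with h | h
        · exact Or.inl ((key p q).mp h)
        · exact Or.inr ((key q p).mp h)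

end GenCorona
end

section
/- Let T be a finite tree and let 𝒫 be a vertex neighborhood partition of T. Then the set Ext(T∘𝒫) of external vertices of the general corona T∘𝒫 is a dominating set of T∘𝒫, is a 2-packing of T∘𝒫, and contains all leaves of T∘𝒫. -/
open SimpleGraph

namespace GenCorona

universe u

variable {V : Type u}

/-- For a finite tree `T` and a vertex neighborhood partition `𝒫` of `T`,
the set of external vertices of `T ∘ 𝒫` is a dominating set, a 2-packing, and contains
all leaves of `T ∘ 𝒫`. -/
theorem ext_dominating_twoPacking_leaves {V : Type u} [Fintype V]
    (T : SimpleGraph V) (hT : T.IsTree) (P : NbhdPartition T) :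
    IsDominating (corona T P) (Ext T P) ∧ Is2Packing (corona T P) (Ext T P) ∧
      ∀ x : CoronaVert T P, IsLeaf (corona T P) x → x ∈ Ext T P := by
  classical
  refine ⟨?_, ?_, ?_⟩
  · rintro (v | ⟨⟨v, A⟩, hA⟩) hx
    · exact absurd ⟨v, rfl⟩ hx
    · refine ⟨Sum.inl v, ⟨v, rfl⟩, ?_⟩
      rw [corona, fromRel_adj]
      exact ⟨by simp, Or.inr rfl⟩
  · rintro x ⟨u, rfl⟩ y ⟨v, rfl⟩ hne
    by_contra h
    push_neg at h
    have htop : (corona T P).edist (Sum.inl u) (Sum.inl v) ≠ ⊤ := by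
      intro ht
      rw [ht] at h
      exact absurd h (by simp)
    obtain ⟨p, hp⟩ := SimpleGraph.exists_walk_of_edist_ne_top htop
    have hlen : p.length ≤ 2 := by
      have := hp.le.trans h
      exact_mod_cast this
    cases p with
    | nil => exact hne rfl
    | cons ha q =>
      rename_i w
      cases q with
      | nil =>
        rw [corona, fromRel_adj] at ha
        rcases ha.2 with h1 | h1 <;> exact h1.elim
      | cons hb r =>
        rename_i w2
        cases r with
        | nil =>
          rw [corona, fromRel_adj] at ha hb
          match w, ha, hb with
          | Sum.inl _, ha, _ => rcases ha.2 with h1 | h1 <;> exact h1.elim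
          | Sum.inr q, ha, hb =>
              have h1 : u = q.val.1 := by
                rcases ha.2 with h1 | h1
                · exact h1
                · exact h1.elim
              have h2 : v = q.val.1 := by
                rcases hb.2 with h2 | h2
                · exact h2.elim
                · exact h2
              exact hne (by simp [h1, h2])
        | cons hc r' => simp at hlen
  · rintro (v | ⟨⟨v, A⟩, hA⟩) hleaf
    · exact ⟨v, rfl⟩
    · exfalso
      obtain ⟨u, hu⟩ := P.nonempty v A hA
      have huv : T.Adj v u := P.subset_nbhd v A hA hu
      obtain ⟨B, hB, hvB⟩ := P.covers u v huv.symm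
      have h1 : Sum.inl v ∈ (corona T P).neighborSet (Sum.inr ⟨(v, A), hA⟩) := by
        rw [corona, SimpleGraph.mem_neighborSet, fromRel_adj]
        exact ⟨by simp, Or.inr rfl⟩
      have h2 : (Sum.inr ⟨(u, B), hB⟩ : CoronaVert T P) ∈
          (corona T P).neighborSet (Sum.inr ⟨(v, A), hA⟩) := by
        rw [corona, SimpleGraph.mem_neighborSet, fromRel_adj]
        refine ⟨?_, Or.inl ⟨huv, hu, hvB⟩⟩
        intro hEq
        have : v = u := by
          have := Sum.inr.inj hEq
          exact congrArg (fun p => p.val.1) this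
        exact huv.ne this
      obtain ⟨a, ha⟩ := Set.ncard_eq_one.mp hleaf
      rw [ha, Set.mem_singleton_iff] at h1 h2
      rw [← h1] at h2
      exact Sum.inl_ne_inr h2.symm


end GenCorona
end

section
/- Let T be a finite tree and let 𝒫 be a vertex neighborhood partition of T. Then the general corona T∘𝒫 is a tree (it is connected and acyclic). -/
/-!
Every vertex `(v, A)` of `T ∘ 𝒫` is joined to `(v, 1)`, and a `T`-edge `uv` is realised by the
edge `(u, A)(v, B)` with `v ∈ A`, `u ∈ B`; hence the corona is connected when `T` is. Since the
parts of `𝒫(u)` are disjoint, this `T`-edge is realised by exactly one edge of the corona, so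
the corona has one pendant edge per vertex `(v, A)` and one further edge per edge of `T`. Counting
gives `|E(T ∘ 𝒫)| + 1 = |V(T ∘ 𝒫)|`, and a connected finite graph with this count is a tree.
-/

open SimpleGraph

namespace GenCorona

universe u

variable {V : Type u}

section Corona

variable {G : SimpleGraph V} {P : NbhdPartition G}

abbrev InternalVert (G : SimpleGraph V) (P : NbhdPartition G) : Type u :=
  {p : V × Set V // p.2 ∈ P.part p.1}

def base : CoronaVert G P → V :=
  Sum.elim id fun p => p.val.1

@[simp] lemma base_inl (v : V) : base (Sum.inl v : CoronaVert G P) = v := rfl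

@[simp] lemma base_inr (p : InternalVert G P) : base (Sum.inr p : CoronaVert G P) = p.val.1 :=
  rfl

lemma InternalVert.ext_of_mem {p q : InternalVert G P} {u : V} (hpq : p.val.1 = q.val.1)
    (hp : u ∈ p.val.2) (hq : u ∈ q.val.2) : p = q := by
  obtain ⟨⟨v, A⟩, hA⟩ := p
  obtain ⟨⟨w, B⟩, hB⟩ := q
  obtain rfl : v = w := hpq
  obtain rfl : A = B := P.eq_of_inter v A hA B hB ⟨u, hp, hq⟩
  rfl

@[simp] lemma not_corona_adj_inl_inl (v w : V) :
    ¬ (corona G P).Adj (Sum.inl v) (Sum.inl w) := by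
  simp [corona]

@[simp] lemma corona_adj_inl_inr (v : V) (q : InternalVert G P) :
    (corona G P).Adj (Sum.inl v) (Sum.inr q) ↔ v = q.val.1 := by
  simp [corona]

@[simp] lemma corona_adj_inr_inl (p : InternalVert G P) (w : V) :
    (corona G P).Adj (Sum.inr p) (Sum.inl w) ↔ w = p.val.1 := by
  rw [adj_comm, corona_adj_inl_inr]

@[simp] lemma corona_adj_inr_inr (p q : InternalVert G P) :
    (corona G P).Adj (Sum.inr p) (Sum.inr q) ↔
      G.Adj p.val.1 q.val.1 ∧ q.val.1 ∈ p.val.2 ∧ p.val.1 ∈ q.val.2 := by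
  simp only [corona, fromRel_adj, ne_eq, Sum.inr.injEq]
  constructor
  · rintro ⟨-, h | ⟨h, hq, hp⟩⟩
    exacts [h, ⟨h.symm, hp, hq⟩]
  · rintro h
    exact ⟨fun hpq => h.1.ne (congrArg (·.val.1) hpq), Or.inl h⟩

lemma corona_reachable_inl_base (x : CoronaVert G P) :
    (corona G P).Reachable x (Sum.inl (base x)) := by
  rcases x with v | p
  · rfl
  · exact Adj.reachable (by simp)

lemma corona_reachable_inl_of_adj {u v : V} (h : G.Adj u v) :
    (corona G P).Reachable (Sum.inl u) (Sum.inl v) := by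
  obtain ⟨A, hA, hvA⟩ := P.covers u v h
  obtain ⟨B, hB, huB⟩ := P.covers v u h.symm
  let a : InternalVert G P := ⟨(u, A), hA⟩
  let b : InternalVert G P := ⟨(v, B), hB⟩
  have hua : (corona G P).Adj (Sum.inl u) (Sum.inr a) := by simp [a]
  have hab : (corona G P).Adj (Sum.inr a) (Sum.inr b) := by simp [a, b, h, hvA, huB]
  have hbv : (corona G P).Adj (Sum.inr b) (Sum.inl v) := by simp [b]
  exact hua.reachable.trans (hab.reachable.trans hbv.reachable)

lemma corona_reachable_inl {u v : V} (h : G.Reachable u v) :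
    (corona G P).Reachable (Sum.inl u) (Sum.inl v) := by
  obtain ⟨w⟩ := h
  induction w with
  | nil => rfl
  | cons hadj _ ih => exact (corona_reachable_inl_of_adj hadj).trans ih

lemma corona_connected (hG : G.Connected) : (corona G P).Connected := by
  have := hG.nonempty
  refine Connected.mk fun x y => ?_
  exact (corona_reachable_inl_base x).trans
    ((corona_reachable_inl (hG.preconnected _ _)).trans (corona_reachable_inl_base y).symm)

/-- Among the edges of the corona, these are exactly the edges `(v, 1)(v, A)`: an edge
`(u, A)(v, B)` projects to the edge `s(u, v)` of `G`, which is not diagonal. -/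
def pendantEdges (G : SimpleGraph V) (P : NbhdPartition G) : Set (Sym2 (CoronaVert G P)) :=
  {e | (e.map base).IsDiag}

lemma eq_of_corona_adj_inr_inr {p q p' q' : InternalVert G P}
    (h : (corona G P).Adj (Sum.inr p) (Sum.inr q))
    (h' : (corona G P).Adj (Sum.inr p') (Sum.inr q'))
    (hp : p.val.1 = p'.val.1) (hq : q.val.1 = q'.val.1) : p = p' ∧ q = q' := by
  rw [corona_adj_inr_inr] at h h'
  exact ⟨InternalVert.ext_of_mem hp h.2.1 (hq ▸ h'.2.1),
    InternalVert.ext_of_mem hq h.2.2 (hp ▸ h'.2.2)⟩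

lemma exists_eq_inr_inr_of_notMem_pendantEdges {e : Sym2 (CoronaVert G P)}
    (he : e ∈ (corona G P).edgeSet) (hpend : e ∉ pendantEdges G P) :
    ∃ p q, (corona G P).Adj (Sum.inr p) (Sum.inr q) ∧ e = s(Sum.inr p, Sum.inr q) := by
  induction e using Sym2.ind with
  | _ x y =>
  rcases x with v | p <;> rcases y with w | q
  · simp at he
  · simp [pendantEdges] at he hpend
    exact absurd he hpend
  · simp [pendantEdges] at he hpend
    exact absurd he.symm hpend
  · exact ⟨p, q, he, rfl⟩

lemma ncard_edgeSet_inter_pendantEdges :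
    ((corona G P).edgeSet ∩ pendantEdges G P).ncard = Nat.card (InternalVert G P) := by
  rw [← Set.ncard_univ]
  symm
  refine Set.ncard_congr (fun q _ => s(Sum.inl q.val.1, Sum.inr q)) ?_ ?_ ?_
  · intro q _
    simp [pendantEdges]
  · intro p q _ _ h
    simp only [Sym2.eq_iff, Sum.inl.injEq, Sum.inr.injEq, reduceCtorEq, and_false,
      or_false] at h
    exact h.2
  · intro e ⟨he, hdiag⟩
    induction e using Sym2.ind with
    | _ x y =>
    rcases x with v | p <;> rcases y with w | q
    · simp at he
    · obtain rfl : v = q.val.1 := by simpa using he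
      exact ⟨q, trivial, rfl⟩
    · obtain rfl : w = p.val.1 := by simpa using he
      exact ⟨p, trivial, Sym2.eq_swap⟩
    · simp [pendantEdges] at he hdiag
      exact absurd hdiag he.1.ne

lemma ncard_edgeSet_diff_pendantEdges :
    ((corona G P).edgeSet \ pendantEdges G P).ncard = G.edgeSet.ncard := by
  refine Set.ncard_congr (fun e _ => e.map base) ?_ ?_ ?_
  · intro e ⟨he, hpend⟩
    obtain ⟨p, q, hpq, rfl⟩ := exists_eq_inr_inr_of_notMem_pendantEdges he hpend
    simpa using ((corona_adj_inr_inr p q).mp hpq).1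
  · intro e₁ e₂ ⟨he₁, hpend₁⟩ ⟨he₂, hpend₂⟩ hmap
    obtain ⟨p, q, hpq, rfl⟩ := exists_eq_inr_inr_of_notMem_pendantEdges he₁ hpend₁
    obtain ⟨p', q', hpq', rfl⟩ := exists_eq_inr_inr_of_notMem_pendantEdges he₂ hpend₂
    simp only [Sym2.map_mk, base_inr, Sym2.eq_iff] at hmap
    rcases hmap with ⟨hp, hq⟩ | ⟨hp, hq⟩
    · obtain ⟨rfl, rfl⟩ := eq_of_corona_adj_inr_inr hpq hpq' hp hq
      rfl
    · obtain ⟨rfl, rfl⟩ := eq_of_corona_adj_inr_inr hpq hpq'.symm hp hq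
      exact Sym2.eq_swap
  · intro e he
    induction e using Sym2.ind with
    | _ u v =>
    have h : G.Adj u v := he
    obtain ⟨A, hA, hvA⟩ := P.covers u v h
    obtain ⟨B, hB, huB⟩ := P.covers v u h.symm
    refine ⟨s(Sum.inr ⟨(u, A), hA⟩, Sum.inr ⟨(v, B), hB⟩), ⟨?_, ?_⟩, rfl⟩
    · simp [h, hvA, huB]
    · simp [pendantEdges, h.ne]

lemma ncard_edgeSet_corona [Finite V] :
    (corona G P).edgeSet.ncard = Nat.card (InternalVert G P) + G.edgeSet.ncard := by
  rw [← Set.ncard_inter_add_ncard_sdiff_eq_ncard _ (pendantEdges G P),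
    ncard_edgeSet_inter_pendantEdges, ncard_edgeSet_diff_pendantEdges]

lemma corona_isTree_of_isTree [Finite V] (hG : G.IsTree) : (corona G P).IsTree := by
  have hcard := (isTree_iff_connected_and_card.mp hG).2
  refine isTree_iff_connected_and_card.mpr ⟨corona_connected hG.connected, ?_⟩
  rw [Nat.card_coe_set_eq] at hcard ⊢
  rw [ncard_edgeSet_corona, Nat.card_sum]
  unfold InternalVert
  omega

end Corona

/-- The general corona of a finite tree is a tree (connected and acyclic). -/
theorem corona_isTree {V : Type u} [Fintype V]
    (T : SimpleGraph V) (hT : T.IsTree) (P : NbhdPartition T) :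
    (corona T P).Connected ∧ (corona T P).IsAcyclic :=
  have h := corona_isTree_of_isTree (P := P) hT
  ⟨h.connected, h.isAcyclic⟩

end GenCorona
end

section
/- Let T be a finite tree with at least three vertices. Then T has a unique dominating 2-packing containing all leaves of T if and only if T is a general corona of a tree. -/
open SimpleGraph

namespace SimpleGraph

variable {V : Type*} {G : SimpleGraph V}

lemma IsAcyclic.not_adj_of_adj_of_adj (hG : G.IsAcyclic) {a b c : V} (hab : G.Adj a b)
    (hbc : G.Adj b c) : ¬ G.Adj a c := fun hac => by
  classical
  exact hG.cliqueFree le_rfl {a, b, c} (is3Clique_triple_iff.mpr ⟨hab, hac, hbc⟩)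

lemma IsAcyclic.eq_of_adj_adj_adj (hG : G.IsAcyclic) {s a b a' b' u : V}
    (h₁ : G.Adj s a) (h₂ : G.Adj a b) (h₃ : G.Adj b u)
    (h₁' : G.Adj s a') (h₂' : G.Adj a' b') (h₃' : G.Adj b' u)
    (hsu : s ≠ u) (hsb : s ≠ b) (hau : a ≠ u) (hsb' : s ≠ b') (hau' : a' ≠ u) :
    a = a' ∧ b = b' := by
  have hp : (Walk.cons h₁ (Walk.cons h₂ h₃.toWalk)).IsPath := by
    simp [Walk.isPath_def, h₁.ne, h₂.ne, h₃.ne, hsb, hsu, hau]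
  have hp' : (Walk.cons h₁' (Walk.cons h₂' h₃'.toWalk)).IsPath := by
    simp [Walk.isPath_def, h₁'.ne, h₂'.ne, h₃'.ne, hsb', hsu, hau']
  have h := (hG.subsingleton_path s u).elim ⟨_, hp⟩ ⟨_, hp'⟩
  simpa using congrArg (fun p : G.Path s u => p.val.support) h

lemma IsTree.eq_of_adj_of_dist_add_one_eq (hG : G.IsTree) (r : V) {u v x : V}
    (hu : G.Adj u x) (hv : G.Adj v x)
    (hux : G.dist r u + 1 = G.dist r x) (hvx : G.dist r v + 1 = G.dist r x) : u = v := by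
  obtain ⟨p, hp⟩ := hG.connected.exists_walk_length_eq_dist r u
  obtain ⟨q, hq⟩ := hG.connected.exists_walk_length_eq_dist r v
  have hpu : (p.concat hu).IsPath := (p.concat hu).isPath_of_length_eq_dist (by simp [hp, hux])
  have hqv : (q.concat hv).IsPath := (q.concat hv).isPath_of_length_eq_dist (by simp [hq, hvx])
  have h := (hG.isAcyclic.subsingleton_path r x).elim ⟨_, hpu⟩ ⟨_, hqv⟩
  simpa using congrArg (fun p : G.Path r x => p.val.penultimate) h

end SimpleGraph

namespace GenCorona

universe u

variable {W : Type*} {G : SimpleGraph W}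

lemma is2Packing_iff {S : Set W} : Is2Packing G S ↔
    (∀ u ∈ S, ∀ v ∈ S, ¬ G.Adj u v) ∧
      ∀ u ∈ S, ∀ v ∈ S, ∀ w, G.Adj w u → G.Adj w v → u = v := by
  refine ⟨fun h => ⟨fun u hu v hv huv => ?_, fun u hu v hv w hwu hwv => ?_⟩,
    fun h u hu v hv huv => ?_⟩
  · exact (two_lt_edist_iff.mp (h u hu v hv huv.ne)).2.1 huv
  · by_contra huv
    have hw : w ∈ G.commonNeighbors u v := (G.mem_commonNeighbors).mpr ⟨hwu.symm, hwv.symm⟩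
    rw [(two_lt_edist_iff.mp (h u hu v hv huv)).2.2] at hw
    exact hw
  · refine two_lt_edist_iff.mpr
      ⟨huv, h.1 u hu v hv, Set.eq_empty_of_forall_notMem fun w hw => ?_⟩
    rw [mem_commonNeighbors] at hw
    exact huv (h.2 u hu v hv w hw.1.symm hw.2.symm)

lemma Is2Packing.not_adj {S : Set W} (hP : Is2Packing G S) {u v : W} (hu : u ∈ S) (hv : v ∈ S) :
    ¬ G.Adj u v :=
  (is2Packing_iff.mp hP).1 u hu v hv

lemma Is2Packing.eq_of_adj_of_adj {S : Set W} (hP : Is2Packing G S) {u v w : W} (hu : u ∈ S)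
    (hv : v ∈ S) (hwu : G.Adj w u) (hwv : G.Adj w v) : u = v :=
  (is2Packing_iff.mp hP).2 u hu v hv w hwu hwv

lemma IsLeaf.eq_of_adj_of_adj {v u w : W} (h : IsLeaf G v) (hu : G.Adj v u) (hw : G.Adj v w) :
    u = w := by
  obtain ⟨a, ha⟩ := Set.ncard_eq_one.mp h
  have hu' : u ∈ G.neighborSet v := hu
  have hw' : w ∈ G.neighborSet v := hw
  rw [ha, Set.mem_singleton_iff] at hu' hw'
  rw [hu', hw']

lemma exists_adj_ne_of_not_isLeaf {v s : W} (h : ¬ IsLeaf G v) (hs : G.Adj v s) :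
    ∃ u, G.Adj v u ∧ u ≠ s := by
  by_contra! hc
  refine h (Set.ncard_eq_one.mpr ⟨s, Set.ext fun u => ⟨hc u, fun hu => ?_⟩⟩)
  rw [Set.mem_singleton_iff.mp hu]
  exact hs

structure IsLeafPerfectCode (G : SimpleGraph W) (S : Set W) : Prop where
  dominating : IsDominating G S
  packing : Is2Packing G S
  leaf_mem : ∀ v, IsLeaf G v → v ∈ S

lemma isLeafPerfectCode_iff {S : Set W} : IsLeafPerfectCode G S ↔
    IsDominating G S ∧ Is2Packing G S ∧ ∀ v, IsLeaf G v → v ∈ S :=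
  ⟨fun ⟨hD, hP, hL⟩ => ⟨hD, hP, hL⟩, fun ⟨hD, hP, hL⟩ => ⟨hD, hP, hL⟩⟩

section Iso

variable {W' : Type*} {G' : SimpleGraph W'} (f : G ≃g G') {S' : Set W'}

lemma IsLeaf.map_iso {v : W} (h : IsLeaf G v) : IsLeaf G' (f v) := by
  have hN : f ⁻¹' G'.neighborSet (f v) = G.neighborSet v := Set.ext fun _ => f.map_adj_iff
  rwa [IsLeaf, ← Set.ncard_preimage_of_injective_subset_range f.injective
    (f.surjective.range_eq ▸ Set.subset_univ _), hN]

lemma IsLeafPerfectCode.preimage_iso (h : IsLeafPerfectCode G' S') :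
    IsLeafPerfectCode G (f ⁻¹' S') where
  dominating v hv := by
    obtain ⟨u, hu, hvu⟩ := h.dominating (f v) hv
    exact ⟨f.symm u, by simpa using hu, by simpa using f.symm.map_adj_iff.mpr hvu⟩
  packing := is2Packing_iff.mpr
    ⟨fun u hu v hv huv => h.packing.not_adj hu hv (f.map_adj_iff.mpr huv),
      fun u hu v hv w hwu hwv => f.injective <|
        h.packing.eq_of_adj_of_adj hu hv (f.map_adj_iff.mpr hwu) (f.map_adj_iff.mpr hwv)⟩
  leaf_mem v hv := h.leaf_mem (f v) (hv.map_iso f)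

end Iso

lemma exists_mem_symmDiff_dist_lt (hG : G.IsTree) (r : W) {C₁ C₂ : Set W}
    (hP₁ : Is2Packing G C₁) (h₂ : IsLeafPerfectCode G C₂) {x : W} (hx₁ : x ∈ C₁)
    (hx₂ : x ∉ C₂) :
    ∃ z ∈ symmDiff C₁ C₂, G.dist r x < G.dist r z := by
  by_contra! hmax
  obtain ⟨y, hy₂, hxy⟩ := h₂.dominating x hx₂
  have hy₁ : y ∉ C₁ := fun hy₁ => hP₁.not_adj hx₁ hy₁ hxy
  have hyx : G.dist r y + 1 = G.dist r x := by
    have := hmax y (Set.mem_symmDiff.mpr (Or.inr ⟨hy₂, hy₁⟩))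
    rcases hG.dist_eq_dist_add_one_of_adj r hxy with h | h <;> omega
  obtain ⟨c, hxc, hcy⟩ := exists_adj_ne_of_not_isLeaf (fun h => hx₂ (h₂.leaf_mem x h)) hxy
  have hxc_dist : G.dist r c = G.dist r x + 1 := by
    rcases hG.dist_eq_dist_add_one_of_adj r hxc with h | h
    · exact (hcy (hG.eq_of_adj_of_dist_add_one_eq r hxc.symm hxy.symm h.symm hyx)).elim
    · exact h
  have hc₂ : c ∉ C₂ := fun hc₂ => hcy (h₂.packing.eq_of_adj_of_adj hc₂ hy₂ hxc hxy)
  obtain ⟨z, hz₂, hcz⟩ := h₂.dominating c hc₂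
  have hzx : z ≠ x := fun h => hx₂ (h ▸ hz₂)
  have hz₁ : z ∉ C₁ := fun hz₁ => hzx (hP₁.eq_of_adj_of_adj hz₁ hx₁ hcz hxc.symm)
  have hzc : G.dist r z + 1 = G.dist r c := by
    have := hmax z (Set.mem_symmDiff.mpr (Or.inr ⟨hz₂, hz₁⟩))
    rcases hG.dist_eq_dist_add_one_of_adj r hcz with h | h <;> omega
  exact hzx (hG.eq_of_adj_of_dist_add_one_eq r hcz.symm hxc hzc hxc_dist.symm)

lemma eq_of_isLeafPerfectCode [Finite W] (hG : G.IsTree) {C₁ C₂ : Set W}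
    (h₁ : IsLeafPerfectCode G C₁) (h₂ : IsLeafPerfectCode G C₂) : C₁ = C₂ := by
  by_contra hne
  obtain ⟨r, hr⟩ := Set.symmDiff_nonempty.mpr hne
  obtain ⟨x, hx, hmax⟩ := Set.exists_max_image _ (G.dist r) (Set.toFinite _) ⟨r, hr⟩
  obtain ⟨z, hz, hlt⟩ : ∃ z ∈ symmDiff C₁ C₂, G.dist r x < G.dist r z := by
    rcases Set.mem_symmDiff.mp hx with ⟨hx₁, hx₂⟩ | ⟨hx₂, hx₁⟩
    · exact exists_mem_symmDiff_dist_lt hG r h₁.packing h₂ hx₁ hx₂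
    · simpa only [symmDiff_comm] using
        exists_mem_symmDiff_dist_lt hG r h₂.packing h₁ hx₂ hx₁
  exact (hmax z hz).not_gt hlt

section Corona

variable {H : SimpleGraph W} {P : NbhdPartition H}

@[simp]
lemma corona_not_adj_inl_inl {u v : W} : ¬ (corona H P).Adj (.inl u) (.inl v) := by
  simp [corona]

@[simp]
lemma corona_adj_inl_inr_s13 {v : W} {p : {p : W × Set W // p.2 ∈ P.part p.1}} :
    (corona H P).Adj (.inl v) (.inr p) ↔ v = p.val.1 := by
  simp [corona]

@[simp]
lemma corona_adj_inr_inl_s13 {v : W} {p : {p : W × Set W // p.2 ∈ P.part p.1}} :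
    (corona H P).Adj (.inr p) (.inl v) ↔ v = p.val.1 := by
  simp [corona]

@[simp]
lemma corona_adj_inr_inr_s13 {p q : {p : W × Set W // p.2 ∈ P.part p.1}} :
    (corona H P).Adj (.inr p) (.inr q) ↔
      H.Adj p.val.1 q.val.1 ∧ q.val.1 ∈ p.val.2 ∧ p.val.1 ∈ q.val.2 := by
  simp only [corona, fromRel_adj, ne_eq, Sum.inr.injEq]
  refine ⟨?_, fun h => ⟨fun hpq => h.1.ne (by rw [hpq]), .inl h⟩⟩
  rintro ⟨-, h | ⟨h₁, h₂, h₃⟩⟩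
  exacts [h, ⟨h₁.symm, h₃, h₂⟩]

lemma mem_ext_of_isLeaf {x : CoronaVert H P} (h : IsLeaf (corona H P) x) : x ∈ Ext H P := by
  obtain v | ⟨⟨v, A⟩, hA⟩ := x
  · exact ⟨v, rfl⟩
  obtain ⟨u, hu⟩ := P.nonempty v A hA
  have hvu : H.Adj v u := P.subset_nbhd v A hA hu
  obtain ⟨B, hB, hvB⟩ := P.covers u v hvu.symm
  have := h.eq_of_adj_of_adj (u := .inl v) (w := .inr ⟨(u, B), hB⟩) (by simp)
    (by simp [hvu, hu, hvB])
  simp at this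

lemma isLeafPerfectCode_ext (P : NbhdPartition H) : IsLeafPerfectCode (corona H P) (Ext H P) where
  dominating := by
    rintro (v | p) hv
    · exact (hv ⟨v, rfl⟩).elim
    · exact ⟨.inl p.val.1, ⟨_, rfl⟩, by simp⟩
  packing := is2Packing_iff.mpr
    ⟨by rintro _ ⟨u, rfl⟩ _ ⟨v, rfl⟩; simp, by
      rintro _ ⟨u, rfl⟩ _ ⟨v, rfl⟩ (w | w) hwu hwv
      · simp at hwu
      · simp_all⟩
  leaf_mem _ := mem_ext_of_isLeaf

end Corona

lemma exists_isLeafPerfectCode_of_isGeneralCoronaOfTree (h : IsGeneralCoronaOfTree G) :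
    ∃ S, IsLeafPerfectCode G S := by
  obtain ⟨_, _, P, -, ⟨f⟩⟩ := h
  exact ⟨_, (isLeafPerfectCode_ext P).preimage_iso f⟩

section CodeTree

variable {T : SimpleGraph W} {S : Set W}

open Classical in
noncomputable def dominator (hD : IsDominating T S) (v : W) : S :=
  if hv : v ∈ S then ⟨v, hv⟩ else ⟨(hD v hv).choose, (hD v hv).choose_spec.1⟩

lemma dominator_of_mem (hD : IsDominating T S) {v : W} (hv : v ∈ S) :
    dominator hD v = ⟨v, hv⟩ :=
  dif_pos hv

lemma adj_dominator (hD : IsDominating T S) {v : W} (hv : v ∉ S) :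
    T.Adj v (dominator hD v) := by
  rw [dominator, dif_neg hv]
  exact (hD v hv).choose_spec.2

lemma dominator_eq_iff (hD : IsDominating T S) (hP : Is2Packing T S) {v s : W} (hv : v ∉ S)
    (hs : s ∈ S) : (dominator hD v : W) = s ↔ T.Adj v s :=
  ⟨fun h => h ▸ adj_dominator hD hv,
    hP.eq_of_adj_of_adj (dominator hD v).2 hs (adj_dominator hD hv)⟩

lemma Is2Packing.edist_eq_three_iff (hP : Is2Packing T S) {s u : W} (hs : s ∈ S) (hu : u ∈ S) :
    T.edist s u = 3 ↔ s ≠ u ∧ ∃ a b, T.Adj s a ∧ T.Adj a b ∧ T.Adj b u := by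
  constructor
  · intro h
    obtain ⟨p, hp⟩ := exists_walk_of_edist_eq_coe (k := 3) h
    refine ⟨fun hsu => by simp [hsu] at h, p.getVert 1, p.getVert 2, ?_, ?_, ?_⟩
    · simpa using p.adj_getVert_succ (i := 0) (by omega)
    · exact p.adj_getVert_succ (by omega)
    · have h₃ := p.adj_getVert_succ (i := 2) (by omega)
      rwa [show 2 + 1 = p.length by omega, Walk.getVert_length] at h₃
  · rintro ⟨hsu, a, b, h₁, h₂, h₃⟩
    refine le_antisymm ?_ (Order.add_one_le_of_lt (hP s hs u hu hsu))
    simpa using edist_le (Walk.cons h₁ (Walk.cons h₂ h₃.toWalk))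

lemma Is2Packing.edist_eq_two_iff (hP : Is2Packing T S) {s u w : W} (hs : s ∈ S) (hu : u ∈ S)
    (hsw : T.Adj s w) : T.edist w u = 2 ↔ s ≠ u ∧ ∃ a, T.Adj w a ∧ T.Adj a u := by
  rw [SimpleGraph.edist_eq_two_iff]
  constructor
  · rintro ⟨-, hwu, a, ha⟩
    rw [mem_commonNeighbors] at ha
    exact ⟨fun hsu => hwu (hsu ▸ hsw.symm), a, ha.1, ha.2.symm⟩
  · rintro ⟨hsu, a, hwa, hau⟩
    refine ⟨fun h => hP.not_adj hs hu (h ▸ hsw),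
      fun hwu => hsu (hP.eq_of_adj_of_adj hs hu hsw.symm hwu),
      a, (T.mem_commonNeighbors).mpr ⟨hwa, hau.symm⟩⟩

lemma Is2Packing.eq_of_adj_adj_adj (hP : Is2Packing T S) (hT : T.IsAcyclic)
    {s u a b a' b' : W} (hs : s ∈ S) (hu : u ∈ S) (hsu : s ≠ u)
    (h₁ : T.Adj s a) (h₂ : T.Adj a b) (h₃ : T.Adj b u)
    (h₁' : T.Adj s a') (h₂' : T.Adj a' b') (h₃' : T.Adj b' u) : a = a' ∧ b = b' :=
  hT.eq_of_adj_adj_adj h₁ h₂ h₃ h₁' h₂' h₃' hsu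
    (fun h => hP.not_adj hs hu (h ▸ h₃)) (fun h => hP.not_adj hs hu (h ▸ h₁))
    (fun h => hP.not_adj hs hu (h ▸ h₃')) (fun h => hP.not_adj hs hu (h ▸ h₁'))

variable {ι : Type*}

def codeGraph (T : SimpleGraph W) (e : ι ≃ S) : SimpleGraph ι where
  Adj i j := T.edist (e i) (e j) = 3
  symm := ⟨fun i j h => by rwa [edist_comm]⟩
  loopless := ⟨fun i h => by simp at h⟩

def codeNbhd (T : SimpleGraph W) (e : ι ≃ S) (w : W) : Set ι :=
  {j | T.edist w (e j) = 2}

lemma codeNbhd_nonempty (hT : T.IsAcyclic) (hS : IsLeafPerfectCode T S) (e : ι ≃ S) {s w : W}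
    (hs : s ∈ S) (hsw : T.Adj s w) : (codeNbhd T e w).Nonempty := by
  have hw : w ∉ S := fun hw => hS.packing.not_adj hs hw hsw
  obtain ⟨x, hwx, hxs⟩ := exists_adj_ne_of_not_isLeaf (fun h => hw (hS.leaf_mem w h)) hsw.symm
  have hx : x ∉ S := fun hx => hxs (hS.packing.eq_of_adj_of_adj hx hs hwx hsw.symm)
  obtain ⟨u, hu, hxu⟩ := hS.dominating x hx
  refine ⟨e.symm ⟨u, hu⟩, show T.edist w (e (e.symm _)) = 2 from ?_⟩
  rw [Equiv.apply_symm_apply]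
  refine (hS.packing.edist_eq_two_iff hs hu hsw).mpr ⟨?_, x, hwx, hxu⟩
  rintro rfl
  exact hT.not_adj_of_adj_of_adj hsw hwx hxu.symm

lemma eq_of_mem_codeNbhd (hT : T.IsAcyclic) (hP : Is2Packing T S) (e : ι ≃ S) {s w x : W}
    {j : ι} (hs : s ∈ S) (hsw : T.Adj s w) (hsx : T.Adj s x) (hw : j ∈ codeNbhd T e w)
    (hx : j ∈ codeNbhd T e x) : w = x := by
  obtain ⟨hsj, a, hwa, haj⟩ := (hP.edist_eq_two_iff hs (e j).2 hsw).mp hw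
  obtain ⟨-, b, hxb, hbj⟩ := (hP.edist_eq_two_iff hs (e j).2 hsx).mp hx
  exact (hP.eq_of_adj_adj_adj hT hs (e j).2 hsj hsw hwa haj hsx hxb hbj).1

def codePartition (hT : T.IsAcyclic) (hS : IsLeafPerfectCode T S) (e : ι ≃ S) :
    NbhdPartition (codeGraph T e) where
  part i := {A | ∃ w, T.Adj (e i) w ∧ A = codeNbhd T e w}
  nonempty := by
    rintro i _ ⟨w, hw, rfl⟩
    exact codeNbhd_nonempty hT hS e (e i).2 hw
  subset_nbhd := by
    rintro i _ ⟨w, hw, rfl⟩ j hj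
    obtain ⟨hij, a, hwa, haj⟩ := (hS.packing.edist_eq_two_iff (e i).2 (e j).2 hw).mp hj
    exact (hS.packing.edist_eq_three_iff (e i).2 (e j).2).mpr ⟨hij, w, a, hw, hwa, haj⟩
  covers := by
    intro i j hij
    obtain ⟨hne, a, b, h₁, h₂, h₃⟩ :=
      (hS.packing.edist_eq_three_iff (e i).2 (e j).2).mp hij
    exact ⟨_, ⟨a, h₁, rfl⟩,
      (hS.packing.edist_eq_two_iff (e i).2 (e j).2 h₁).mpr ⟨hne, b, h₂, h₃⟩⟩
  eq_of_inter := by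
    rintro i _ ⟨w, hw, rfl⟩ _ ⟨x, hx, rfl⟩ ⟨j, hjw, hjx⟩
    rw [eq_of_mem_codeNbhd hT hS.packing e (e i).2 hw hx hjw hjx]

lemma dominator_eq_or_edist_eq_three (hD : IsDominating T S) (hP : Is2Packing T S) {v w : W}
    (h : T.Adj v w) :
    dominator hD v = dominator hD w ∨ T.edist (dominator hD v) (dominator hD w) = 3 := by
  by_cases hv : v ∈ S <;> by_cases hw : w ∈ S
  · exact (hP.not_adj hv hw h).elim
  · left
    ext
    rw [dominator_of_mem hD hv, eq_comm, dominator_eq_iff hD hP hw hv]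
    exact h.symm
  · left
    ext
    rw [dominator_of_mem hD hw, dominator_eq_iff hD hP hv hw]
    exact h
  · rw [or_iff_not_imp_left]
    intro hne
    exact (hP.edist_eq_three_iff (dominator hD v).2 (dominator hD w).2).mpr
      ⟨fun h' => hne (Subtype.ext h'), v, w, (adj_dominator hD hv).symm, h, adj_dominator hD hw⟩

lemma codeGraph_preconnected (hT : T.Preconnected) (hD : IsDominating T S) (hP : Is2Packing T S)
    (e : ι ≃ S) : (codeGraph T e).Preconnected := by
  intro i j
  have hij := (reachable_iff_reflTransGen _ _).mp (hT (e i) (e j))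
  have := Relation.ReflTransGen.lift' (p := (codeGraph T e).Adj)
    (fun v => e.symm (dominator hD v)) (fun v w h => ?_) _ _ hij
  · simpa [Function.onFun, dominator_of_mem hD, reachable_iff_reflTransGen] using this
  · rcases dominator_eq_or_edist_eq_three hD hP h with h' | h'
    · simp only [Function.onFun, h']
      exact .refl
    · exact .single (by simpa [codeGraph] using h')

lemma codeGraph_isAcyclic (hT : T.IsAcyclic) (hP : Is2Packing T S) (e : ι ≃ S) :
    (codeGraph T e).IsAcyclic := by
  rw [isAcyclic_iff_forall_adj_isBridge]
  intro i j hij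
  rw [isBridge_iff]
  intro hreach
  obtain ⟨-, a, b, h₁, h₂, h₃⟩ := (hP.edist_eq_three_iff (e i).2 (e j).2).mp hij
  have ha : a ∉ S := fun ha => hP.not_adj (e i).2 ha h₁
  have hb : b ∉ S := fun hb => hP.not_adj hb (e j).2 h₃
  have hS_ab : ∀ {u x : W}, u ∈ S → s(u, x) ≠ s(a, b) := fun hu h => by
    rcases Sym2.mem_iff.mp (h ▸ Sym2.mem_mk_left _ _) with rfl | rfl
    exacts [ha hu, hb hu]
  have hdel : ∀ {u v : W}, T.Adj u v → s(u, v) ≠ s(a, b) →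
      (T.deleteEdges {s(a, b)}).Adj u v :=
    fun h hne => deleteEdges_adj.mpr ⟨h, hne⟩
  -- Walks of the code graph avoiding `ij` lift to walks of `T` avoiding its middle edge `ab`.
  have hlift := Relation.ReflTransGen.lift' (fun k => (e k : W))
    (p := (T.deleteEdges {s(a, b)}).Adj) (fun k l hkl => ?_) _ _
    ((reachable_iff_reflTransGen _ _).mp hreach)
  · refine (isBridge_iff.mp (isAcyclic_iff_forall_adj_isBridge.mp hT h₂)) ?_
    have hai := hdel h₁.symm (Sym2.eq_swap ▸ hS_ab (e i).2)
    have hjb := hdel h₃.symm (hS_ab (e j).2)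
    exact hai.reachable.trans (((reachable_iff_reflTransGen _ _).mpr hlift).trans hjb.reachable)
  · rw [deleteEdges_adj, Set.mem_singleton_iff] at hkl
    obtain ⟨hkl, hne⟩ := hkl
    obtain ⟨-, x, y, g₁, g₂, g₃⟩ := (hP.edist_eq_three_iff (e k).2 (e l).2).mp hkl
    have hS_eq : ∀ {m n : ι} {z : W}, T.Adj z (e m) → T.Adj z (e n) → m = n := fun hm hn =>
      e.injective (Subtype.ext (hP.eq_of_adj_of_adj (e _).2 (e _).2 hm hn))
    have hxy : s(x, y) ≠ s(a, b) := by
      intro hxy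
      rcases Sym2.eq_iff.mp hxy with ⟨rfl, rfl⟩ | ⟨rfl, rfl⟩
      · exact hne (by rw [hS_eq g₁.symm h₁.symm, hS_eq g₃ h₃])
      · exact hne (by rw [hS_eq g₁.symm h₃, hS_eq g₃ h₁.symm, Sym2.eq_swap])
    exact .tail (.tail (.single (hdel g₁ (hS_ab (e k).2))) (hdel g₂ hxy))
      (hdel g₃ (Sym2.eq_swap ▸ hS_ab (e l).2))

lemma codeGraph_isTree [Nonempty ι] (hT : T.IsTree) (hD : IsDominating T S)
    (hP : Is2Packing T S) (e : ι ≃ S) : (codeGraph T e).IsTree :=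
  ⟨⟨codeGraph_preconnected hT.connected.preconnected hD hP e⟩,
    codeGraph_isAcyclic hT.isAcyclic hP e⟩

lemma adj_iff_of_notMem (hT : T.IsAcyclic) (hD : IsDominating T S) (hP : Is2Packing T S)
    {v w : W} (hv : v ∉ S) (hw : w ∉ S) :
    T.Adj v w ↔ T.edist (dominator hD v) (dominator hD w) = 3 ∧
      T.edist v (dominator hD w) = 2 ∧ T.edist w (dominator hD v) = 2 := by
  set s := dominator hD v
  set t := dominator hD w
  have hsv : T.Adj s v := (adj_dominator hD hv).symm
  have htw : T.Adj t w := (adj_dominator hD hw).symm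
  rw [hP.edist_eq_three_iff s.2 t.2, hP.edist_eq_two_iff s.2 t.2 hsv,
    hP.edist_eq_two_iff t.2 s.2 htw]
  constructor
  · intro h
    have hst : (s : W) ≠ t := fun hst => hT.not_adj_of_adj_of_adj hsv h (by rw [hst]; exact htw)
    exact ⟨⟨hst, v, w, hsv, h, htw.symm⟩, ⟨hst, w, h, htw.symm⟩,
      ⟨hst.symm, v, h.symm, hsv.symm⟩⟩
  · rintro ⟨-, ⟨hst, a, hva, hat⟩, -, b, hwb, hbs⟩
    obtain ⟨-, rfl⟩ :=
      hP.eq_of_adj_adj_adj hT s.2 t.2 hst hsv hva hat hbs.symm hwb.symm htw.symm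
    exact hva

open Classical in
noncomputable def toCorona (hT : T.IsAcyclic) (hS : IsLeafPerfectCode T S) (e : ι ≃ S) (v : W) :
    CoronaVert (codeGraph T e) (codePartition hT hS e) :=
  if hv : v ∈ S then .inl (e.symm ⟨v, hv⟩)
  else .inr ⟨(e.symm (dominator hS.dominating v), codeNbhd T e v),
    v, by simpa using (adj_dominator hS.dominating hv).symm, rfl⟩

variable (hT : T.IsAcyclic) (hS : IsLeafPerfectCode T S) (e : ι ≃ S)

lemma toCorona_injective : Function.Injective (toCorona hT hS e) := by
  intro v w h
  by_cases hv : v ∈ S <;> by_cases hw : w ∈ S <;>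
    simp only [toCorona, hv, hw, ↓reduceDIte, reduceCtorEq, Sum.inl.injEq, Sum.inr.injEq,
      EmbeddingLike.apply_eq_iff_eq, Subtype.mk.injEq] at h
  · exact h
  obtain ⟨hd, hN⟩ : _ ∧ codeNbhd T e v = codeNbhd T e w :=
    Prod.ext_iff.mp (Subtype.ext_iff.mp h)
  have hsv := (adj_dominator hS.dominating hv).symm
  have hsw := (adj_dominator hS.dominating hw).symm
  rw [← e.symm.injective hd] at hsw
  obtain ⟨j, hj⟩ := codeNbhd_nonempty hT hS e (dominator _ v).2 hsv
  exact eq_of_mem_codeNbhd hT hS.packing e (dominator _ v).2 hsv hsw hj (hN ▸ hj)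

lemma toCorona_surjective : Function.Surjective (toCorona hT hS e) := by
  rintro (i | ⟨⟨i, A⟩, hA⟩)
  · exact ⟨e i, by simp [toCorona]⟩
  · obtain ⟨w, hw, rfl⟩ := id hA
    have hwS : w ∉ S := fun h => hS.packing.not_adj (e i).2 h hw
    have hd : dominator hS.dominating w = e i :=
      Subtype.ext ((dominator_eq_iff hS.dominating hS.packing hwS (e i).2).mpr hw.symm)
    exact ⟨w, by simp [toCorona, hwS, hd]⟩

lemma corona_adj_toCorona_iff {v w : W} :
    (corona _ _).Adj (toCorona hT hS e v) (toCorona hT hS e w) ↔ T.Adj v w := by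
  have mixed : ∀ {v w : W}, v ∈ S → w ∉ S →
      ((corona _ _).Adj (toCorona hT hS e v) (toCorona hT hS e w) ↔ T.Adj v w) := by
    intro v w hv hw
    simp only [toCorona, hv, hw, dite_true, dite_false, corona_adj_inl_inr_s13,
      e.symm.injective.eq_iff]
    rw [eq_comm, Subtype.ext_iff, dominator_eq_iff hS.dominating hS.packing hw hv, T.adj_comm]
  by_cases hv : v ∈ S <;> by_cases hw : w ∈ S
  · simp [toCorona, hv, hw, hS.packing.not_adj hv hw]
  · exact mixed hv hw
  · rw [adj_comm, T.adj_comm]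
    exact mixed hw hv
  · rw [adj_iff_of_notMem hT hS.dominating hS.packing hv hw]
    simp only [toCorona, hv, hw, dite_false, corona_adj_inr_inr_s13]
    simp [codeGraph, codeNbhd]

end CodeTree

theorem isGeneralCoronaOfTree_of_isLeafPerfectCode [Finite W] {T : SimpleGraph W} {S : Set W}
    (hT : T.IsTree) (hS : IsLeafPerfectCode T S) : IsGeneralCoronaOfTree T := by
  have : Nonempty S := hT.connected.nonempty.map (dominator hS.dominating)
  let e := (Finite.equivFin S).symm
  have : Nonempty (Fin (Nat.card S)) := e.nonempty
  exact ⟨_, codeGraph T e, codePartition hT.isAcyclic hS e,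
    codeGraph_isTree hT hS.dominating hS.packing e,
    ⟨⟨.ofBijective _ ⟨toCorona_injective _ _ _, toCorona_surjective _ _ _⟩,
      corona_adj_toCorona_iff _ _ _⟩⟩⟩

theorem uniquePacking_iff_isGeneralCorona_general {V : Type u} [Fintype V]
    (T : SimpleGraph V) (hT : T.IsTree) :
    (∃! S : Set V, IsDominating T S ∧ Is2Packing T S ∧
        ∀ v : V, IsLeaf T v → v ∈ S) ↔
      IsGeneralCoronaOfTree T := by
  simp_rw [← isLeafPerfectCode_iff]
  refine ⟨fun ⟨S, hS, _⟩ => isGeneralCoronaOfTree_of_isLeafPerfectCode hT hS, fun h => ?_⟩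
  obtain ⟨S, hS⟩ := exists_isLeafPerfectCode_of_isGeneralCoronaOfTree h
  exact ⟨S, hS, fun S' hS' => eq_of_isLeafPerfectCode hT hS' hS⟩

/-- A finite tree `T` with at least three vertices has a unique dominating
2-packing containing all its leaves if and only if `T` is a general corona of a tree. -/
theorem uniquePacking_iff_isGeneralCorona {V : Type u} [Fintype V]
    (T : SimpleGraph V) (hT : T.IsTree) (h3 : 3 ≤ Fintype.card V) :
    (∃! S : Set V, IsDominating T S ∧ Is2Packing T S ∧
        ∀ v : V, IsLeaf T v → v ∈ S) ↔
      IsGeneralCoronaOfTree T :=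
  uniquePacking_iff_isGeneralCorona_general T hT

end GenCorona
end
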